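/- arXiv:2207.13870 — 8 statements merged into one kernel-verified Lean document; each statement's English description precedes it below -/
import Mathlib

section
/- For every state s of an Aho–Corasick automaton and every character c, the string φ(δ*(s,c)) equals the longest suffix of φ(s)·c that is represented by a trie state. -/
/-- For every state `u` and character `c`, `φ(δ*(u,c))` is the
longest suffix of `φ(u)·c` represented by a trie state. Trie states are
identified with the strings (prefixes of patterns of `D`) they represent; `g`
is `δ*`, characterized by its recursive equations via the failure function `f`. -/
theorem stmt6 {α : Type*} (D : Finset (List α)) (hD : D.Nonempty)
    (f : List α → List α) (g : List α → α → List α)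
    (St : Set (List α)) (hSt : St = {u | ∃ p ∈ D, u <+: p})
    (hf : ∀ u ∈ St, u ≠ [] → f u ∈ St ∧ f u <:+ u ∧ f u ≠ u ∧
      ∀ v ∈ St, v <:+ u → v ≠ u → v.length ≤ (f u).length)
    (hg1 : ∀ u ∈ St, ∀ c, u ++ [c] ∈ St → g u c = u ++ [c])
    (hg2 : ∀ u ∈ St, ∀ c, u ++ [c] ∉ St → u ≠ [] → g u c = g (f u) c)
    (hg3 : ∀ c, [c] ∉ St → g [] c = []) :
    ∀ u ∈ St, ∀ c, g u c ∈ St ∧ g u c <:+ u ++ [c] ∧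
      ∀ v ∈ St, v <:+ u ++ [c] → v.length ≤ (g u c).length := by
  have hnil : ([] : List α) ∈ St := by
    rw [hSt]; obtain ⟨p, hp⟩ := hD; exact ⟨p, hp, List.nil_prefix⟩
  have hclosed : ∀ v ∈ St, ∀ w, w <+: v → w ∈ St := by
    intro v hv w hw
    rw [hSt] at hv ⊢
    obtain ⟨p, hp, hvp⟩ := hv
    exact ⟨p, hp, hw.trans hvp⟩
  -- base case: u = []
  have hbase : ∀ c, g [] c ∈ St ∧ g [] c <:+ [] ++ [c] ∧
      ∀ v ∈ St, v <:+ [] ++ [c] → v.length ≤ (g [] c).length := by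
    intro c
    by_cases h1 : ([] : List α) ++ [c] ∈ St
    · rw [hg1 [] hnil c h1]
      exact ⟨h1, List.suffix_rfl, fun v _ hv' => hv'.length_le⟩
    · simp only [List.nil_append] at h1 ⊢
      rw [hg3 c h1]
      refine ⟨hnil, ⟨[c], by simp⟩, ?_⟩
      intro v hv hv'
      rcases List.suffix_cons_iff.mp hv' with h | h
      · exact absurd (h ▸ hv) h1
      · simp [List.suffix_nil.mp h]
  suffices H : ∀ n (u : List α), u ∈ St → u.length ≤ n → ∀ c,
      g u c ∈ St ∧ g u c <:+ u ++ [c] ∧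
      ∀ v ∈ St, v <:+ u ++ [c] → v.length ≤ (g u c).length by
    intro u hu c; exact H u.length u hu le_rfl c
  intro n
  induction n with
  | zero =>
    intro u _ hlen c
    have : u = [] := List.length_eq_zero_iff.mp (Nat.le_zero.mp hlen)
    subst this
    exact hbase c
  | succ n ih =>
    intro u hu hlen c
    by_cases h1 : u ++ [c] ∈ St
    · rw [hg1 u hu c h1]
      exact ⟨h1, List.suffix_rfl, fun v _ hv' => hv'.length_le⟩
    · rcases eq_or_ne u [] with rfl | hne
      · exact hbase c
      · obtain ⟨hfSt, hfsuf, hfne, hfmax⟩ := hf u hu hne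
        have hflt : (f u).length < u.length :=
          lt_of_le_of_ne hfsuf.length_le
            (fun h => hfne (hfsuf.eq_of_length h))
        obtain ⟨m1, m2, m3⟩ := ih (f u) hfSt (by omega) c
        rw [hg2 u hu c h1 hne]
        refine ⟨m1, ?_, ?_⟩
        · obtain ⟨t, ht⟩ := hfsuf
          exact m2.trans ⟨t, by rw [← List.append_assoc, ht]⟩
        · intro v hv hv'
          rcases eq_or_ne v (u ++ [c]) with rfl | hvne
          · exact absurd hv h1
          rcases List.eq_nil_or_concat v with rfl | ⟨v', a, rfl⟩
          · simp
          · -- v = v' ++ [a], suffix of u ++ [c] ⇒ a = c, v' <:+ u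
            simp only [List.concat_eq_append] at hv hvne
            obtain ⟨t, ht⟩ := hv'
            simp only [List.concat_eq_append] at ht ⊢
            rw [← List.append_assoc] at ht
            obtain ⟨ht1, ht2⟩ := List.append_inj' ht (by simp)
            have ha : a = c := by simpa using ht2
            subst ha
            have hv'suf : v' <:+ u := ⟨t, ht1⟩
            have hv'ne : v' ≠ u := fun h => hvne (by rw [h])
            have hv'St : v' ∈ St := hclosed _ hv _ ⟨[a], rfl⟩
            have hlen' : v'.length ≤ (f u).length :=
              hfmax v' hv'St hv'suf hv'ne
            have : v' <:+ f u :=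
              List.suffix_of_suffix_length_le hv'suf hfsuf hlen'
            obtain ⟨t', ht'⟩ := this
            exact m3 (v' ++ [a]) hv ⟨t', by rw [← List.append_assoc, ht']⟩
end

section
/- Invariant of the AC matching algorithm: after reading the prefix T[0..j) of the text starting from the initial state and applying δ* successively, the current state s satisfies: φ(s) is the longest suffix of T[0..j) that is a prefix of some pattern in D. -/
/-- Invariant of the AC matching algorithm: after reading the
prefix `T[0..j)` from the initial state via `δ*` (= `g`, satisfying the
longest-suffix property), the current state is the longest suffix of `T[0..j)`
that is a prefix of some pattern in `D`. States are identified with the strings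
(prefixes of patterns) they represent; the state after reading `T[0..j)` is
`(T.take j).foldl g []`. -/
theorem stmt7 {α : Type*} (D : Finset (List α)) (hD : D.Nonempty)
    (hne : ∀ p ∈ D, p ≠ [])
    (g : List α → α → List α)
    (St : Set (List α)) (hSt : St = {u | ∃ p ∈ D, u <+: p})
    (hg : ∀ u ∈ St, ∀ c, g u c ∈ St ∧ g u c <:+ u ++ [c] ∧
      ∀ v ∈ St, v <:+ u ++ [c] → v.length ≤ (g u c).length)
    (T : List α) (j : ℕ) (hj : j ≤ T.length) :
    (T.take j).foldl g [] ∈ St ∧ (T.take j).foldl g [] <:+ T.take j ∧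
      ∀ v ∈ St, v <:+ T.take j → v.length ≤ ((T.take j).foldl g []).length := by
  obtain ⟨p, hp⟩ := hD
  have hnil : ([] : List α) ∈ St := by
    rw [hSt]; exact ⟨p, hp, List.nil_prefix⟩
  have hclosed : ∀ u ∈ St, ∀ v, v <+: u → v ∈ St := by
    intro u hu v hv
    rw [hSt] at hu ⊢
    obtain ⟨q, hq, hq'⟩ := hu
    exact ⟨q, hq, hv.trans hq'⟩
  suffices h : ∀ L : List α, L.foldl g [] ∈ St ∧ L.foldl g [] <:+ L ∧
      ∀ v ∈ St, v <:+ L → v.length ≤ (L.foldl g []).length from h (T.take j)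
  intro L
  induction L using List.reverseRecOn with
  | nil =>
    refine ⟨hnil, List.suffix_refl _, ?_⟩
    intro v _ hv
    simpa using hv.length_le
  | append_singleton L c ih =>
    obtain ⟨hs, hsuf, hmax⟩ := ih
    obtain ⟨hg1, hg2, hg3⟩ := hg _ hs c
    rw [List.foldl_append]
    have happ : ∀ {a b : List α}, a <:+ b → a ++ [c] <:+ b ++ [c] := by
      rintro a b ⟨t, rfl⟩; exact ⟨t, by simp⟩
    refine ⟨hg1, hg2.trans (happ hsuf), ?_⟩
    intro v hv hvsuf
    rcases v.eq_nil_or_concat with rfl | ⟨v', c', rfl⟩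
    · simp
    · -- v = v' ++ [c'], suffix of L ++ [c], so c' = c and v' <:+ L
      obtain ⟨t, ht⟩ := hvsuf
      rw [List.concat_eq_append, ← List.append_assoc] at ht
      have h2 := List.append_inj' ht rfl
      obtain ⟨rfl⟩ : c' = c := by simpa using h2.2
      have hv'L : t ++ v' <+: L := ⟨[], by simpa using h2.1⟩
      have hv'suf : v' <:+ L := ⟨t, by simpa using h2.1⟩
      have hv'St : v' ∈ St := hclosed _ hv _ (by simp)
      have hlen : v'.length ≤ (L.foldl g []).length := hmax v' hv'St hv'suf
      have hv's : v' <:+ L.foldl g [] :=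
        List.suffix_of_suffix_length_le hv'suf hsuf hlen
      have h := hg3 (v' ++ [c]) (by simpa using hv) (happ hv's)
      simpa using h
end

section
/- Correctness of the AC algorithm: pattern P_k ∈ D occurs in T ending at position j (i.e., P_k = T[j−|P_k| .. j)) if and only if k ∈ h(s_j), where s_j is the state reached after reading T[0..j) from the initial state via δ*. -/
/-!
After reading `t`, the automaton sits in the longest suffix of `t` that is a prefix of a pattern.
This invariant survives reading a letter `c` because the set of pattern prefixes is prefix-closed:
a nonempty suffix `v ++ [c]` of `t ++ [c]` in that set comes from a suffix `v` of `t` in it, which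
by maximality is a suffix of the current state. A pattern, being itself a pattern prefix, is then
a suffix of `t` exactly when it is a suffix of the state.
-/

namespace List

variable {α : Type*}

structure IsLongestSuffixIn (S : Set (List α)) (t s : List α) : Prop where
  mem : s ∈ S
  suffix : s <:+ t
  length_le : ∀ v ∈ S, v <:+ t → v.length ≤ s.length

variable {S : Set (List α)}

theorem IsLongestSuffixIn.suffix_iff {t s v : List α} (hs : IsLongestSuffixIn S t s)
    (hv : v ∈ S) : v <:+ s ↔ v <:+ t :=
  ⟨fun h => h.trans hs.suffix,
    fun h => suffix_of_suffix_length_le h hs.suffix (hs.length_le v hv h)⟩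

theorem IsLongestSuffixIn.concat (hS : ∀ v a, v ++ [a] ∈ S → v ∈ S) {t s s' : List α} {c : α}
    (hs : IsLongestSuffixIn S t s) (hs' : IsLongestSuffixIn S (s ++ [c]) s') :
    IsLongestSuffixIn S (t ++ [c]) s' := by
  refine ⟨hs'.mem, hs'.suffix.trans (suffix_append_self_iff.2 hs.suffix), fun v hv hvt => ?_⟩
  rcases suffix_concat_iff.1 hvt with rfl | ⟨v', rfl, hv't⟩
  · exact Nat.zero_le _
  · have hv's : v' <:+ s := (hs.suffix_iff (hS v' c hv)).2 hv't
    exact hs'.length_le _ hv (suffix_append_self_iff.2 hv's)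

theorem isLongestSuffixIn_foldl (hS : ∀ v a, v ++ [a] ∈ S → v ∈ S) (hnil : [] ∈ S)
    {g : List α → α → List α} (hg : ∀ u ∈ S, ∀ c, IsLongestSuffixIn S (u ++ [c]) (g u c))
    (t : List α) : IsLongestSuffixIn S t (t.foldl g []) := by
  induction t using reverseRecOn with
  | nil => exact ⟨hnil, suffix_rfl, fun v _ hv => hv.length_le⟩
  | append_singleton t c ih =>
    rw [foldl_concat]
    exact ih.concat hS (hg _ ih.mem c)

theorem suffix_take_iff {T u : List α} {j : ℕ} (hj : j ≤ T.length) :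
    u <:+ T.take j ↔ u.length ≤ j ∧ u = (T.take j).drop (j - u.length) := by
  have htake : (T.take j).length = j := length_take_of_le hj
  refine ⟨fun h => ⟨htake ▸ h.length_le, ?_⟩, fun ⟨_, h⟩ => h ▸ drop_suffix _ _⟩
  rw [suffix_iff_eq_drop, htake] at h
  exact h

end List

theorem stmt8_general {α ι : Type*} (P : ι → List α)
    (g : List α → α → List α)
    (St : Set (List α)) (hSt : St = {u | ∃ k, u <+: P k})
    (hg : ∀ u ∈ St, ∀ c, g u c ∈ St ∧ g u c <:+ u ++ [c] ∧
      ∀ v ∈ St, v <:+ u ++ [c] → v.length ≤ (g u c).length)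
    (T : List α) (j : ℕ) (hj : j ≤ T.length) (k : ι) :
    ((P k).length ≤ j ∧ P k = (T.take j).drop (j - (P k).length)) ↔
      P k <:+ (T.take j).foldl g [] := by
  subst hSt
  have hclosed : ∀ v a, v ++ [a] ∈ {u | ∃ k, u <+: P k} → v ∈ {u | ∃ k, u <+: P k} :=
    fun v a ⟨m, hm⟩ => ⟨m, (List.prefix_append v [a]).trans hm⟩
  have hstate := List.isLongestSuffixIn_foldl hclosed ⟨k, List.nil_prefix⟩
    (fun u hu c => ⟨(hg u hu c).1, (hg u hu c).2.1, (hg u hu c).2.2⟩) (T.take j)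
  rw [hstate.suffix_iff ⟨k, List.prefix_rfl⟩, List.suffix_take_iff hj]

/-- Correctness of the AC algorithm: pattern `P k` occurs in `T`
ending at position `j` (i.e. `P k = T[j−|P k| .. j)`) iff `k ∈ h(s_j)`, where
`s_j = (T.take j).foldl g []` is the state reached after reading `T[0..j)` via
`δ*` (= `g`) and `h(s) = {k | P k is a suffix of φ(s)}`. States are identified
with the strings (prefixes of patterns) they represent. -/
theorem stmt8 {α ι : Type*} (P : ι → List α) (hne : ∀ k, P k ≠ [])
    (g : List α → α → List α)
    (St : Set (List α)) (hSt : St = {u | ∃ k, u <+: P k})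
    (hg : ∀ u ∈ St, ∀ c, g u c ∈ St ∧ g u c <:+ u ++ [c] ∧
      ∀ v ∈ St, v <:+ u ++ [c] → v.length ≤ (g u c).length)
    (T : List α) (j : ℕ) (hj : j ≤ T.length) (k : ι) :
    ((P k).length ≤ j ∧ P k = (T.take j).drop (j - (P k).length)) ↔
      P k <:+ (T.take j).foldl g [] :=
  stmt8_general P g St hSt hg T j hj k
end

section
/- For any state s of an Aho–Corasick automaton, h(s) = { k : P_k ∈ D and P_k is a suffix of φ(s) }; i.e., the union of outputs collected along the failure-link chain from s equals exactly the set of patterns that are suffixes of φ(s). -/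
/-!
Every step of the failure chain from `u` moves to a shorter suffix of `u`, so all strings on the
chain are suffixes of `u`. Conversely, if a state `v` is a proper suffix of a state `u`, then
maximality of `f u` forces `|v| ≤ |f u|`; two suffixes of `u` are comparable, so `v` is a suffix
of `f u`, and induction on `|u|` shows that the chain from `u` passes through `v`. Patterns are
states, so the patterns met along the chain are exactly the patterns that are suffixes of `u`.
-/

namespace AhoCorasick

variable {α : Type*}

def IsFailureFunction (St : Set (List α)) (f : List α → List α) : Prop :=
  ∀ u ∈ St, u ≠ [] → f u ∈ St ∧ f u <:+ u ∧ f u ≠ u ∧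
    ∀ v ∈ St, v <:+ u → v ≠ u → v.length ≤ (f u).length

def FailStep (f : List α → List α) (a b : List α) : Prop :=
  a ≠ [] ∧ b = f a

namespace IsFailureFunction

variable {St : Set (List α)} {f : List α → List α} {v : List α}

theorem length_lt {u : List α} (hf : IsFailureFunction St f) (hu : u ∈ St) (hne : u ≠ []) :
    (f u).length < u.length := by
  obtain ⟨-, hsuf, hne', -⟩ := hf u hu hne
  exact lt_of_le_of_ne hsuf.length_le (mt hsuf.eq_of_length hne')

theorem suffix_apply {u : List α} (hf : IsFailureFunction St f) (hu : u ∈ St) (hv : v ∈ St)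
    (hvu : v <:+ u) (hne : v ≠ u) : v <:+ f u := by
  have hu_ne : u ≠ [] := by
    rintro rfl
    exact hne (List.suffix_nil.mp hvu)
  obtain ⟨-, hfu, -, hmax⟩ := hf u hu hu_ne
  exact List.suffix_of_suffix_length_le hvu hfu (hmax v hv hvu hne)

theorem mem_and_suffix_of_reflTransGen {u : List α} (hf : IsFailureFunction St f) (hu : u ∈ St)
    (h : Relation.ReflTransGen (FailStep f) u v) : v ∈ St ∧ v <:+ u := by
  induction h with
  | refl => exact ⟨hu, List.suffix_refl u⟩
  | tail _ hstep ih =>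
    obtain ⟨hne, rfl⟩ := hstep
    obtain ⟨hmem, hsuf, -⟩ := hf _ ih.1 hne
    exact ⟨hmem, hsuf.trans ih.2⟩

theorem reflTransGen_of_suffix {u : List α} (hf : IsFailureFunction St f) (hu : u ∈ St)
    (hv : v ∈ St) (hvu : v <:+ u) : Relation.ReflTransGen (FailStep f) u v := by
  by_cases heq : v = u
  · exact heq ▸ Relation.ReflTransGen.refl
  have hne : u ≠ [] := by
    rintro rfl
    exact heq (List.suffix_nil.mp hvu)
  have hchain := hf.reflTransGen_of_suffix (hf u hu hne).1 hv (hf.suffix_apply hu hv hvu heq)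
  exact Relation.ReflTransGen.head ⟨hne, rfl⟩ hchain
termination_by u.length
decreasing_by exact hf.length_lt hu hne

end IsFailureFunction

end AhoCorasick

open AhoCorasick in
/-- For any state `u`, the union of outputs collected along the
failure-link chain from `u` equals exactly the set of patterns that are
suffixes of `φ(u)`: `h(u) = {k | P k <:+ u}`. States are identified with the
strings (prefixes of patterns) they represent; one failure step relates `a` to
`f a` for nonempty `a`. -/
theorem stmt9 {α ι : Type*} (P : ι → List α)
    (f : List α → List α)
    (St : Set (List α)) (hSt : St = {u | ∃ k, u <+: P k})
    (hf : ∀ u ∈ St, u ≠ [] → f u ∈ St ∧ f u <:+ u ∧ f u ≠ u ∧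
      ∀ v ∈ St, v <:+ u → v ≠ u → v.length ≤ (f u).length)
    (u : List α) (hu : u ∈ St) :
    {k | ∃ t, Relation.ReflTransGen (fun a b => a ≠ [] ∧ b = f a) u t ∧ P k = t} =
      {k | P k <:+ u} := by
  have hfail : IsFailureFunction St f := hf
  ext k
  constructor
  · rintro ⟨t, hchain, rfl⟩
    exact (hfail.mem_and_suffix_of_reflTransGen hu hchain).2
  · intro hk
    have hPk : P k ∈ St := hSt ▸ ⟨k, List.prefix_refl _⟩
    exact ⟨P k, hfail.reflTransGen_of_suffix hu hPk hk, rfl⟩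
end

section
/- In a double-array, the CHECK condition is forced by injectivity: if for all states s and labels c with δ(s,c)=t we have BASE[s]+c = t and CHECK[t]=s, and distinct transitions lead to distinct states (the transition relation forms a trie, i.e., each non-root state has a unique incoming transition), then for any state s and label c with δ(s,c)=⊥, either BASE[s]+c is a vacant id or CHECK[BASE[s]+c] ≠ s. -/
/-! If `CHECK (BASE s + c) = s` held for an occupied non-root id `t = BASE s + c`, the unique
transition `(s', c')` into `t` would satisfy `CHECK t = s'` and `BASE s' + c' = t`, so `s' = s`
and then `c' = c`; hence `δ s c = some t`. The root has no incoming transition, and there the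
invalid `CHECK root` does the job. -/

theorem DoubleArray.eq_of_transition_of_check_eq {Used : Set ℕ} {δ : ℕ → ℕ → Option ℕ}
    {BASE CHECK : ℕ → ℕ}
    (hDA : ∀ s ∈ Used, ∀ c t, δ s c = some t → BASE s + c = t ∧ CHECK t = s)
    {s s' c c' : ℕ} (hs' : s' ∈ Used) (hδ : δ s' c' = some (BASE s + c))
    (hcheck : CHECK (BASE s + c) = s) : s' = s ∧ c' = c := by
  obtain ⟨hbase, hcheck'⟩ := hDA s' hs' c' _ hδ
  obtain rfl : s' = s := hcheck'.symm.trans hcheck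
  exact ⟨rfl, by omega⟩

theorem stmt11_general (Used : Set ℕ) (root : ℕ)
    (δ : ℕ → ℕ → Option ℕ) (BASE CHECK : ℕ → ℕ)
    (htrie : ∀ t ∈ Used, t ≠ root → ∃! p : ℕ × ℕ, p.1 ∈ Used ∧ δ p.1 p.2 = some t)
    (hDA : ∀ s ∈ Used, ∀ c t, δ s c = some t → BASE s + c = t ∧ CHECK t = s)
    (hcr : ∀ s ∈ Used, CHECK root ≠ s) :
    ∀ s ∈ Used, ∀ c, δ s c = none →
      BASE s + c ∉ Used ∨ CHECK (BASE s + c) ≠ s := by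
  intro s hs c hnone
  rw [or_iff_not_imp_left, not_not]
  intro hused hcheck
  by_cases hroot : BASE s + c = root
  · exact hcr s hs (hroot ▸ hcheck)
  obtain ⟨⟨s', c'⟩, ⟨hs', hδ⟩, -⟩ := htrie _ hused hroot
  obtain ⟨rfl, rfl⟩ := DoubleArray.eq_of_transition_of_check_eq hDA hs' hδ hcheck
  simp [hδ] at hnone

/-- The CHECK condition is forced by injectivity: if the
transition relation forms a trie (each non-root used state has exactly one
incoming transition), the double-array equations hold for all transitions, and
`CHECK` at the root is invalid (not equal to any state id), then for any state
`s` and label `c` with `δ(s,c) = ⊥`, either `BASE[s]+c` is a vacant id (not a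
used state id) or `CHECK[BASE[s]+c] ≠ s`. -/
theorem stmt11 (Used : Set ℕ) (root : ℕ) (hroot : root ∈ Used)
    (δ : ℕ → ℕ → Option ℕ) (BASE CHECK : ℕ → ℕ)
    (htrie : ∀ t ∈ Used, t ≠ root → ∃! p : ℕ × ℕ, p.1 ∈ Used ∧ δ p.1 p.2 = some t)
    (hDA : ∀ s ∈ Used, ∀ c t, δ s c = some t → BASE s + c = t ∧ CHECK t = s)
    (hcr : ∀ s ∈ Used, CHECK root ≠ s) :
    ∀ s ∈ Used, ∀ c, δ s c = none →
      BASE s + c ∉ Used ∨ CHECK (BASE s + c) ≠ s :=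
  stmt11_general Used root δ BASE CHECK htrie hDA hcr
end

section
/- Compact-format correctness: suppose BASE and CHECK satisfy BASE[s]+c = t and CHECK[t] = c for every transition δ(s,c)=t, and BASE[s] ≠ BASE[s'] for all distinct states s, s'. Then the lookup 'compute t := BASE[s]+c; return t if t is a valid state id and CHECK[t] = c, else ⊥' correctly computes δ(s,c): a false positive CHECK[t]=c with δ(s,c)=⊥ would imply some other state s' with BASE[s']=BASE[s]. -/
/-- Compact-format correctness: if `BASE[s]+c = t` and
`CHECK[t] = c` hold for every transition `δ(s,c) = t`, the `BASE` values of
distinct states are distinct, each non-root state has a unique incoming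
transition, labels are `< σ`, and `CHECK` at the root is invalid (`≥ σ`), then
whenever `t := BASE[s]+c` is a valid (used) state id and `CHECK[t] = c`, we in
fact have `δ(s,c) = t`; a false positive would contradict the distinct-BASE
condition. -/
theorem stmt12 (σ : ℕ) (Used : Set ℕ) (root : ℕ) (hroot : root ∈ Used)
    (δ : ℕ → ℕ → Option ℕ) (BASE CHECK : ℕ → ℕ)
    (hlab : ∀ s c t, δ s c = some t → c < σ)
    (htrie : ∀ t ∈ Used, t ≠ root → ∃! p : ℕ × ℕ, p.1 ∈ Used ∧ δ p.1 p.2 = some t)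
    (hDA : ∀ s ∈ Used, ∀ c t, δ s c = some t → BASE s + c = t ∧ CHECK t = c)
    (hbase : ∀ s ∈ Used, ∀ s' ∈ Used, s ≠ s' → BASE s ≠ BASE s')
    (hcr : ∀ c, c < σ → CHECK root ≠ c) :
    ∀ s ∈ Used, ∀ c, c < σ → BASE s + c ∈ Used → CHECK (BASE s + c) = c →
      δ s c = some (BASE s + c) := by
  intro s hs c hc ht hck
  set t := BASE s + c with htdef
  have htr : t ≠ root := fun h => hcr c hc (h ▸ hck)
  obtain ⟨⟨s', c'⟩, ⟨hs', hδ⟩, _⟩ := htrie t ht htr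
  obtain ⟨hb, hc'⟩ := hDA s' hs' c' t hδ
  have hcc : c' = c := hc' ▸ hck
  subst hcc
  have hbb : BASE s' = BASE s := by omega
  have : s = s' := by
    by_contra h
    exact hbase s hs s' hs' h hbb.symm
  subst this
  exact hδ
end

section
/- During the AC scan of a text T of length n, the total number of state moves (both goto transitions via δ and failure transitions via f) is at most 2n. -/
/-! Each goto move raises the depth by at most one and each failure move lowers it by at least
one; since the depth ends no lower than it starts, there are no more failure moves than goto
moves. -/

open Finset

theorem Fin.sum_univ_succ_sub_castSucc {G : Type*} [AddCommGroup G] {m : ℕ}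
    (f : Fin (m + 1) → G) :
    ∑ i : Fin m, (f i.succ - f i.castSucc) = f (Fin.last m) - f 0 := by
  induction m with
  | zero => simp
  | succ m ih =>
    simp only [Fin.sum_univ_castSucc, Fin.succ_castSucc, ih (fun i => f i.castSucc)]
    simp

theorem card_le_two_mul_card_filter_of_potential {m : ℕ} (d : Fin (m + 1) → ℤ)
    (p : Fin m → Prop) [DecidablePred p] (hd : d 0 ≤ d (Fin.last m))
    (hstep : ∀ i, d i.succ - d i.castSucc ≤ if p i then 1 else -1) :
    m ≤ 2 * #{i | p i} := by
  have hsum : d (Fin.last m) - d 0 ≤ #{i | p i} - #{i | ¬p i} := by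
    calc d (Fin.last m) - d 0 = ∑ i, (d i.succ - d i.castSucc) :=
          (Fin.sum_univ_succ_sub_castSucc d).symm
      _ ≤ ∑ i, if p i then 1 else -1 := sum_le_sum fun i _ => hstep i
      _ = #{i | p i} - #{i | ¬p i} := by simp [sum_ite, sub_eq_add_neg]
  have hcard : #{i | p i} + #{i | ¬p i} = m := by
    simpa using card_filter_add_card_filter_not (s := (univ : Finset (Fin m))) p
  omega

/-- The AC scan of a text of length `n` makes at most `2n` state
moves. Abstractly: if `d i` is the depth `|φ(s_i)|` of the `i`-th visited state
in a run of `m` moves starting at depth `0`, where each goto move increases the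
depth by at most `1` (root self-loops keep depth `0`), each failure move
strictly decreases the depth, and exactly `n` of the moves are goto moves, then
`m ≤ 2n`. -/
theorem stmt15 (n m : ℕ) (d : Fin (m + 1) → ℕ) (isGoto : Fin m → Bool)
    (h0 : d 0 = 0)
    (hstep : ∀ i : Fin m,
      if isGoto i then d i.succ ≤ d i.castSucc + 1 else d i.succ < d i.castSucc)
    (hn : (Finset.univ.filter fun i => isGoto i = true).card = n) :
    m ≤ 2 * n := by
  rw [← hn]
  refine card_le_two_mul_card_filter_of_potential (fun j => d j) _ (by simp [h0]) fun i => ?_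
  have := hstep i
  split_ifs at this ⊢ <;> omega
end

section
/- Suffix-closure of failure-reachability: if u and v are strings represented by trie states with v a suffix of u, then the state of v is reachable from the state of u by zero or more failure-link steps. -/
/-- Suffix-closure of failure-reachability: if `u` and `v` are
strings represented by trie states (prefixes of patterns) and `v` is a suffix
of `u`, then the state of `v` is reachable from the state of `u` by zero or
more failure-link steps. -/
theorem stmt16 {α ι : Type*} (P : ι → List α)
    (f : List α → List α)
    (St : Set (List α)) (hSt : St = {u | ∃ k, u <+: P k})
    (hf : ∀ u ∈ St, u ≠ [] → f u ∈ St ∧ f u <:+ u ∧ f u ≠ u ∧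
      ∀ v ∈ St, v <:+ u → v ≠ u → v.length ≤ (f u).length)
    (u v : List α) (hu : u ∈ St) (hv : v ∈ St) (hsuf : v <:+ u) :
    Relation.ReflTransGen (fun a b => a ≠ [] ∧ b = f a) u v := by
  clear hSt
  obtain ⟨n, hn⟩ : ∃ n, u.length = n := ⟨_, rfl⟩
  induction n using Nat.strong_induction_on generalizing u with
  | _ n ih =>
    subst hn
    by_cases hvu : v = u
    · exact hvu ▸ Relation.ReflTransGen.refl
    · have hne : u ≠ [] := by
        rintro rfl
        exact hvu (List.eq_nil_of_suffix_nil hsuf)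
      obtain ⟨hfSt, hfsuf, hfne, hmax⟩ := hf u hu hne
      have hlen : v.length ≤ (f u).length := hmax v hv hsuf hvu
      have hvf : v <:+ f u := by
        rw [← List.reverse_prefix] at hsuf hfsuf ⊢
        exact List.prefix_of_prefix_length_le hsuf hfsuf
          (by simpa using hlen)
      have hflt : (f u).length < u.length :=
        lt_of_le_of_ne hfsuf.length_le (fun h => hfne (hfsuf.eq_of_length h))
      exact Relation.ReflTransGen.head ⟨hne, rfl⟩
        (ih _ hflt _ hfSt hvf rfl)
end
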